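/- Suppose there is a sequence (a_i)_{i≥1} of nonnegative reals with ∑_{i=1}^∞ i²·a_i < ∞, and suppose P(τ_k = i) ≤ a_i for all k and i. Then for any constant C > 0 there exists a nonincreasing nonnegative sequence (c_j)_{j≥1} with c_1 finite such that c_{j+1} + C·∑_{i=j}^k i·P(τ_k = i) ≤ c_j for all j ≤ k and all k. -/
import Mathlib


/-- Proposition 5 (uniformly upper bounded probability series): if the marginal pmfs
`p k · = P(τ k = ·)` of the delays are uniformly dominated by a sequence `a` with finite
second moment `∑ i² a i < ∞`, then for any `C > 0` there exists a nonincreasing nonnegative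
sequence `c` (with `c 1` finite, automatic in `ℝ`) satisfying
`c (j+1) + C · ∑_{i=j}^k i · P(τ k = i) ≤ c j` for all `1 ≤ j ≤ k`. -/
theorem exists_c_of_dominated_delays (p : ℕ → ℕ → ℝ) (a : ℕ → ℝ)
    (hp : ∀ k i, 0 ≤ p k i) (ha : ∀ i, 0 ≤ a i)
    (hdom : ∀ k i, p k i ≤ a i)
    (hmom : Summable (fun i : ℕ => (i : ℝ) ^ 2 * a i)) :
    ∀ C : ℝ, 0 < C → ∃ c : ℕ → ℝ, (∀ j, 0 ≤ c j) ∧ (∀ j, c (j + 1) ≤ c j) ∧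
      ∀ k j : ℕ, 1 ≤ j → j ≤ k →
        c (j + 1) + C * ∑ i ∈ Finset.Icc j k, (i : ℝ) * p k i ≤ c j := by
  intro C hC
  set f : ℕ → ℝ := fun i => (i : ℝ) * a i with hf
  have hf0 : ∀ i, 0 ≤ f i := fun i => mul_nonneg (Nat.cast_nonneg i) (ha i)
  have hfle : ∀ i, f i ≤ (i : ℝ) ^ 2 * a i := by
    intro i
    rcases Nat.eq_zero_or_pos i with h | h
    · simp [hf, h]
    · have : (i : ℝ) ≤ (i : ℝ) ^ 2 := by
        have : (1 : ℝ) ≤ (i : ℝ) := by exact_mod_cast h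
        nlinarith
      exact mul_le_mul_of_nonneg_right this (ha i)
  have h1 : Summable f := hmom.of_nonneg_of_le hf0 hfle
  have h2 : Summable (fun i : ℕ => ((i : ℝ) + 1) * f i) := by
    have := hmom.add h1
    refine this.congr fun i => ?_
    simp [hf]; ring
  set F : ℕ → ℕ → ℝ := fun j i => ((i + 1 - j : ℕ) : ℝ) * f i with hF
  have hF0 : ∀ j i, 0 ≤ F j i := fun j i =>
    mul_nonneg (Nat.cast_nonneg _) (hf0 i)
  have hFle : ∀ j i, F j i ≤ ((i : ℝ) + 1) * f i := by
    intro j i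
    refine mul_le_mul_of_nonneg_right ?_ (hf0 i)
    have : (i + 1 - j : ℕ) ≤ i + 1 := Nat.sub_le _ _
    exact_mod_cast this
  have hFs : ∀ j, Summable (F j) := fun j => h2.of_nonneg_of_le (hF0 j) (hFle j)
  have hFmono : ∀ j i, F (j + 1) i ≤ F j i := by
    intro j i
    refine mul_le_mul_of_nonneg_right ?_ (hf0 i)
    have : (i + 1 - (j + 1) : ℕ) ≤ i + 1 - j := Nat.sub_le_sub_left (Nat.le_succ j) _
    exact_mod_cast this
  refine ⟨fun j => C * ∑' i, F j i, ?_, ?_, ?_⟩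
  · intro j
    exact mul_nonneg hC.le (tsum_nonneg (hF0 j))
  · intro j
    exact mul_le_mul_of_nonneg_left (Summable.tsum_le_tsum (hFmono j) (hFs (j + 1)) (hFs j)) hC.le
  · intro k j hj hjk
    set g : ℕ → ℝ := fun i => if j ≤ i then f i else 0 with hg
    have hg0 : ∀ i, 0 ≤ g i := by
      intro i; by_cases h : j ≤ i <;> simp [hg, h, hf0 i]
    have hgs : Summable g := by
      refine h1.of_nonneg_of_le hg0 fun i => ?_
      by_cases h : j ≤ i <;> simp [hg, h, hf0 i]
    have hdiff : ∀ i, F j i - F (j + 1) i = g i := by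
      intro i
      by_cases h : j ≤ i
      · have e1 : (i + 1 - j : ℕ) = (i - j) + 1 := by omega
        have e2 : (i + 1 - (j + 1) : ℕ) = i - j := by omega
        simp [hF, hg, h, e1, e2]
        push_cast
        ring
      · have e1 : (i + 1 - j : ℕ) = 0 := by omega
        have e2 : (i + 1 - (j + 1) : ℕ) = 0 := by omega
        simp [hF, hg, h, e1, e2]
    have hsum : C * ∑' i, F (j + 1) i + C * ∑' i, g i = C * ∑' i, F j i := by
      rw [← mul_add]
      congr 1
      rw [← Summable.tsum_add (hFs (j + 1)) hgs]
      refine tsum_congr fun i => ?_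
      have := hdiff i
      linarith
    have hS : ∑ i ∈ Finset.Icc j k, (i : ℝ) * p k i ≤ ∑' i, g i := by
      have step1 : ∑ i ∈ Finset.Icc j k, (i : ℝ) * p k i ≤ ∑ i ∈ Finset.Icc j k, g i := by
        refine Finset.sum_le_sum fun i hi => ?_
        have hji : j ≤ i := (Finset.mem_Icc.mp hi).1
        simp only [hg, if_pos hji, hf]
        exact mul_le_mul_of_nonneg_left (hdom k i) (Nat.cast_nonneg i)
      exact step1.trans (Summable.sum_le_tsum _ (fun i _ => hg0 i) hgs)
    calc C * ∑' i, F (j + 1) i + C * ∑ i ∈ Finset.Icc j k, (i : ℝ) * p k i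
        ≤ C * ∑' i, F (j + 1) i + C * ∑' i, g i := by
          have := mul_le_mul_of_nonneg_left hS hC.le
          linarith
      _ = C * ∑' i, F j i := hsum
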